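/- Let X and Y be Hilbert spaces, T : X → Y a bounded linear operator with dim N(T) < ∞, with a least-squares projection approximation {(X_n, T_n)} that has kernel approximability. Set g_n := gap(P_{N(T)^⊥}(X_n), T*T(X_n)). Then there exists n* ∈ ℕ such that for all n ≥ n* and all y ∈ D(T†): ‖T_n† y − T† y‖ ≤ (1 − g_n²)^{−1/2} · dist(T† y, X_n). -/

import Mathlib

open Filter Topology Metric Submodule ContinuousLinearMap

/-- Orthogonal projection onto a subspace `K` (as an operator `H →L[ℝ] H`),
defined whenever `K` admits orthogonal projections (e.g. `K` closed). -/
noncomputable def orthProj {H : Type*} [NormedAddCommGroup H] [InnerProductSpace ℝ H]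
    (K : Submodule ℝ H) : H →L[ℝ] H :=
  open scoped Classical in
  if h : HasOrthogonalProjection K then
    haveI := h
    K.subtypeL.comp (orthogonalProjection K)
  else 0

/-- `δ(M,N) = sup {dist(x,N) : x ∈ M, ‖x‖ = 1}` (0 if `M = {0}`, as `sSup ∅ = 0` in `ℝ`). -/
noncomputable def deltaSub {H : Type*} [NormedAddCommGroup H] [InnerProductSpace ℝ H]
    (M N : Submodule ℝ H) : ℝ :=
  sSup {d : ℝ | ∃ x ∈ M, ‖x‖ = 1 ∧ d = Metric.infDist x (N : Set H)}

/-- The gap between two subspaces. -/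
noncomputable def gapSub {H : Type*} [NormedAddCommGroup H] [InnerProductSpace ℝ H]
    (M N : Submodule ℝ H) : ℝ :=
  max (deltaSub M N) (deltaSub N M)

/-!
Let `N = ker T`. Kernel approximability and `dim N < ∞` force `N ≤ Xₙ` for large `n`, so that
`xₙ = Tₙ†y` lies in `Xₙ ∩ N^⊥`, and Galerkin orthogonality makes `e = xₙ - T†y` orthogonal to
`Wₙ = T*T(Xₙ)`. For such `e`, the projection of `e` onto `Mₙ = P_{N^⊥}(Xₙ)` has norm at most
`gₙ‖e‖`, so by Pythagoras `(1 - gₙ²)‖e‖² ≤ ‖e - m‖²` for every `m ∈ Mₙ`; the choice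
`m = P_{N^⊥}(xₙ - P_{Xₙ}T†y)` gives `‖e - m‖ ≤ dist(T†y, Xₙ)`. Finally `gₙ < 1`: both spaces are
finite-dimensional, and `⟪T*T v, P_{N^⊥} v⟫ = ‖T v‖²` shows that neither contains a nonzero vector
orthogonal to the other.
-/

open scoped RealInnerProductSpace

section Projection

variable {H : Type*} [NormedAddCommGroup H] [InnerProductSpace ℝ H]

lemma orthProj_eq_starProjection (K : Submodule ℝ H) [K.HasOrthogonalProjection] :
    orthProj K = K.starProjection := by
  rw [orthProj, dif_pos ‹_›]
  rfl

lemma infDist_eq_norm_sub_starProjection (K : Submodule ℝ H) [K.HasOrthogonalProjection]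
    (x : H) : infDist x K = ‖x - K.starProjection x‖ := by
  simp only [infDist_eq_iInf, dist_eq_norm, starProjection_minimal]
  rfl

lemma infDist_eq_norm_of_mem_orthogonal {K : Submodule ℝ H} [K.HasOrthogonalProjection] {x : H}
    (hx : x ∈ Kᗮ) : infDist x K = ‖x‖ := by
  rw [infDist_eq_norm_sub_starProjection, (starProjection_apply_eq_zero_iff K).2 hx, sub_zero]

lemma infDist_lt_norm_of_notMem_orthogonal {K : Submodule ℝ H} [K.HasOrthogonalProjection]
    {x : H} (hx : x ∉ Kᗮ) : infDist x K < ‖x‖ := by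
  have hP : 0 < ‖K.starProjection x‖ :=
    norm_pos_iff.2 fun h => hx ((starProjection_apply_eq_zero_iff K).1 h)
  have hpyth := K.norm_sq_eq_add_norm_sq_starProjection x
  rw [starProjection_orthogonal_val, ← infDist_eq_norm_sub_starProjection] at hpyth
  nlinarith [infDist_nonneg (x := x) (s := (K : Set H)), norm_nonneg x]

lemma exists_mem_orthogonal_norm_eq_one {K N : Submodule ℝ H} [K.HasOrthogonalProjection]
    (hKN : K ≤ N) (hNK : ¬ N ≤ K) : ∃ u ∈ N, u ∈ Kᗮ ∧ ‖u‖ = 1 := by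
  obtain ⟨v, hvN, hvK⟩ := SetLike.not_le_iff_exists.1 hNK
  set w := v - K.starProjection v
  have hw : w ≠ 0 := fun h => hvK (K.starProjection_eq_self_iff.1 (sub_eq_zero.1 h).symm)
  exact ⟨‖w‖⁻¹ • w, N.smul_mem _ (N.sub_mem hvN (hKN (K.starProjection_apply_mem v))),
    Kᗮ.smul_mem _ (K.sub_starProjection_mem_orthogonal v), norm_smul_inv_norm hw⟩

/- A unit vector of `N` orthogonal to `N ⊓ V i` is at distance `1` from it, whereas the finitely
many centres of a `1/2`-net of the unit sphere of `N` eventually lie within `1/2` of `N ⊓ V i`. -/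
lemma eventually_le_of_tendsto_infDist {ι : Type*} {l : Filter ι} {N : Submodule ℝ H}
    [FiniteDimensional ℝ N] {V : ι → Submodule ℝ H}
    (h : ∀ x ∈ N, Tendsto (fun i => infDist x (N ⊓ V i : Submodule ℝ H)) l (𝓝 0)) :
    ∀ᶠ i in l, N ≤ V i := by
  have hS : IsCompact ((↑) '' sphere (0 : N) 1 : Set H) :=
    (isCompact_sphere _ _).image continuous_subtype_val
  obtain ⟨t, htS, ht, hcover⟩ := hS.finite_cover_balls one_half_pos
  have hnet : ∀ᶠ i in l, ∀ c ∈ t, infDist c (N ⊓ V i : Submodule ℝ H) < 1 / 2 := by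
    refine (eventually_all_finite ht).2 fun c hc => (h c ?_).eventually (gt_mem_nhds one_half_pos)
    obtain ⟨c, -, rfl⟩ := htS hc
    exact c.2
  filter_upwards [hnet] with i hi
  by_contra hNV
  obtain ⟨u, huN, huK, hu⟩ := exists_mem_orthogonal_norm_eq_one (K := N ⊓ V i) inf_le_left
    fun h => hNV (h.trans inf_le_right)
  obtain ⟨c, hct, huc⟩ := Set.mem_iUnion₂.1 (hcover ⟨⟨u, huN⟩, mem_sphere_zero_iff_norm.2 hu, rfl⟩)
  have := infDist_le_infDist_add_dist (s := ((N ⊓ V i : Submodule ℝ H) : Set H)) (x := u) (y := c)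
  rw [infDist_eq_norm_of_mem_orthogonal huK, hu] at this
  linarith [hi c hct, mem_ball.1 huc]

end Projection

section Gap

variable {H : Type*} [NormedAddCommGroup H] [InnerProductSpace ℝ H] {M N : Submodule ℝ H}

lemma deltaSub_nonneg (M N : Submodule ℝ H) : 0 ≤ deltaSub M N :=
  Real.sSup_nonneg (by rintro d ⟨x, -, -, rfl⟩; exact infDist_nonneg)

lemma infDist_le_deltaSub {x : H} (hx : x ∈ M) (hx1 : ‖x‖ = 1) :
    infDist x N ≤ deltaSub M N := by
  refine le_csSup ⟨1, ?_⟩ ⟨x, hx, hx1, rfl⟩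
  rintro d ⟨x, -, hx1, rfl⟩
  simpa [hx1] using infDist_le_dist_of_mem (x := x) N.zero_mem

lemma infDist_le_deltaSub_mul_norm [N.HasOrthogonalProjection] {x : H} (hx : x ∈ M) :
    infDist x N ≤ deltaSub M N * ‖x‖ := by
  rcases eq_or_ne x 0 with rfl | hx0
  · simp [infDist_zero_of_mem N.zero_mem]
  have hunit := infDist_le_deltaSub (N := N) (M.smul_mem ‖x‖⁻¹ hx) (norm_smul_inv_norm hx0)
  rwa [infDist_eq_norm_sub_starProjection, map_smul, ← smul_sub, norm_smul, norm_inv, norm_norm,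
    ← infDist_eq_norm_sub_starProjection, inv_mul_le_iff₀ (norm_pos_iff.2 hx0), mul_comm] at hunit

lemma deltaSub_lt_one [FiniteDimensional ℝ M] [N.HasOrthogonalProjection] (h : M ⊓ Nᗮ = ⊥) :
    deltaSub M N < 1 := by
  have hunit : ∀ x ∈ M, ‖x‖ = 1 → infDist x N < 1 := fun x hxM hx1 =>
    hx1 ▸ infDist_lt_norm_of_notMem_orthogonal fun hxN => by
      simp [(Submodule.eq_bot_iff _).1 h x ⟨hxM, hxN⟩] at hx1
  rcases Set.eq_empty_or_nonempty {d : ℝ | ∃ x ∈ M, ‖x‖ = 1 ∧ d = infDist x (N : Set H)}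
    with hempty | ⟨_, x₁, hx₁M, hx₁, rfl⟩
  · rw [deltaSub, hempty, Real.sSup_empty]
    exact one_pos
  have hS : IsCompact ((↑) '' sphere (0 : M) 1 : Set H) :=
    (isCompact_sphere _ _).image continuous_subtype_val
  obtain ⟨_, ⟨x₀, hx₀, rfl⟩, hmax⟩ := hS.exists_isMaxOn
    ⟨x₁, ⟨x₁, hx₁M⟩, mem_sphere_zero_iff_norm.2 hx₁, rfl⟩
    (continuous_infDist_pt (N : Set H)).continuousOn
  rw [deltaSub]
  refine lt_of_le_of_lt (csSup_le ⟨_, x₁, hx₁M, hx₁, rfl⟩ ?_)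
    (hunit x₀ x₀.2 (mem_sphere_zero_iff_norm.1 hx₀))
  rintro _ ⟨x, hxM, hx1, rfl⟩
  exact hmax ⟨⟨x, hxM⟩, mem_sphere_zero_iff_norm.2 hx1, rfl⟩

lemma gapSub_lt_one [FiniteDimensional ℝ M] [FiniteDimensional ℝ N] (hMN : M ⊓ Nᗮ = ⊥)
    (hNM : N ⊓ Mᗮ = ⊥) : gapSub M N < 1 :=
  max_lt (deltaSub_lt_one hMN) (deltaSub_lt_one hNM)

lemma norm_starProjection_le_deltaSub_mul_norm [M.HasOrthogonalProjection]
    [N.HasOrthogonalProjection] {e : H} (he : e ∈ Nᗮ) :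
    ‖M.starProjection e‖ ≤ deltaSub M N * ‖e‖ := by
  set f := M.starProjection e
  have hf : ‖f‖ ^ 2 ≤ ‖e‖ * (deltaSub M N * ‖f‖) :=
    calc ‖f‖ ^ 2 = ⟪e, f - N.starProjection f⟫ := by
          rw [inner_sub_right,
            (Submodule.mem_orthogonal' N e).1 he _ (N.starProjection_apply_mem f), sub_zero, ← real_inner_self_eq_norm_sq, eq_comm, ← sub_eq_zero, ← inner_sub_left,
            M.starProjection_inner_eq_zero e f (M.starProjection_apply_mem e)]
      _ ≤ ‖e‖ * infDist f N := by
          rw [infDist_eq_norm_sub_starProjection]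
          exact real_inner_le_norm _ _
      _ ≤ ‖e‖ * (deltaSub M N * ‖f‖) := by
          gcongr
          exact infDist_le_deltaSub_mul_norm (M.starProjection_apply_mem e)
  rcases (norm_nonneg f).eq_or_lt with hf0 | hfpos
  · rw [← hf0]
    exact mul_nonneg (deltaSub_nonneg M N) (norm_nonneg e)
  · nlinarith

lemma norm_le_inv_sqrt_one_sub_gapSub_sq_mul [M.HasOrthogonalProjection]
    [N.HasOrthogonalProjection] (hgap : gapSub M N < 1) {e m : H} (he : e ∈ Nᗮ) (hm : m ∈ M) :
    ‖e‖ ≤ (√(1 - gapSub M N ^ 2))⁻¹ * ‖e - m‖ := by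
  set g := gapSub M N
  set f := M.starProjection e
  have hδ : deltaSub M N ≤ g := le_max_left _ _
  have hpyth : ‖e‖ ^ 2 = ‖f‖ ^ 2 + ‖e - f‖ ^ 2 := by
    rw [M.norm_sq_eq_add_norm_sq_starProjection e, starProjection_orthogonal_val]
  have hbest : ‖e - f‖ ≤ ‖e - m‖ := by
    rw [← infDist_eq_norm_sub_starProjection, ← dist_eq_norm]
    exact infDist_le_dist_of_mem hm
  have hf : ‖f‖ ≤ g * ‖e‖ :=
    (norm_starProjection_le_deltaSub_mul_norm he).trans (by gcongr)
  have hg : 0 < 1 - g ^ 2 := by nlinarith [deltaSub_nonneg M N]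
  rw [inv_mul_eq_div, le_div_iff₀ (Real.sqrt_pos.2 hg), ← pow_le_pow_iff_left₀ (by positivity)
    (norm_nonneg _) two_ne_zero, mul_pow, Real.sq_sqrt hg.le]
  nlinarith [pow_le_pow_left₀ (norm_nonneg _) hf 2, pow_le_pow_left₀ (norm_nonneg _) hbest 2]

end Gap

section Kernel

variable {E F : Type*} [NormedAddCommGroup E] [InnerProductSpace ℝ E] [NormedAddCommGroup F]
  [InnerProductSpace ℝ F] (T : E →L[ℝ] F)

lemma orthogonal_ker_comp_starProjection_le (V : Submodule ℝ E) [V.HasOrthogonalProjection]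
    (hV : LinearMap.ker (T : E →ₗ[ℝ] F) ≤ V) :
    (LinearMap.ker ((T.comp V.starProjection : E →L[ℝ] F) : E →ₗ[ℝ] F))ᗮ ≤
      V ⊓ (LinearMap.ker (T : E →ₗ[ℝ] F))ᗮ := by
  have hVperp : Vᗮ ≤ LinearMap.ker ((T.comp V.starProjection : E →L[ℝ] F) : E →ₗ[ℝ] F) :=
    fun x hx => by simp [(starProjection_apply_eq_zero_iff V).2 hx]
  have hker : LinearMap.ker (T : E →ₗ[ℝ] F) ≤
      LinearMap.ker ((T.comp V.starProjection : E →L[ℝ] F) : E →ₗ[ℝ] F) :=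
    fun x hx => by simpa [V.starProjection_eq_self_iff.2 (hV hx)] using hx
  refine le_inf ?_ (orthogonal_le hker)
  simpa only [orthogonal_orthogonal] using orthogonal_le hVperp

lemma apply_starProjection_orthogonal_ker [CompleteSpace E] (v : E) :
    T ((LinearMap.ker (T : E →ₗ[ℝ] F))ᗮ.starProjection v) = T v := by
  have hv := (LinearMap.ker (T : E →ₗ[ℝ] F))ᗮ.sub_starProjection_mem_orthogonal v
  rw [orthogonal_orthogonal_eq_closure, (T.isClosed_ker).submodule_topologicalClosure_eq,
    LinearMap.mem_ker, map_sub, sub_eq_zero] at hv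
  exact hv.symm

end Kernel

variable {X Y : Type*} [NormedAddCommGroup X] [InnerProductSpace ℝ X] [CompleteSpace X]
  [NormedAddCommGroup Y] [InnerProductSpace ℝ Y] [CompleteSpace Y]

section Operator

variable (T : X →L[ℝ] Y)

lemma inner_adjoint_comp_self_starProjection_orthogonal_ker_eq_zero_iff (v : X) :
    ⟪(adjoint T ∘L T) v, (LinearMap.ker (T : X →ₗ[ℝ] Y))ᗮ.starProjection v⟫ = 0 ↔ T v = 0 := by
  rw [comp_apply, adjoint_inner_left, apply_starProjection_orthogonal_ker, inner_self_eq_zero]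

variable (V : Submodule ℝ X)

lemma map_starProjection_inf_orthogonal_map_adjoint_comp_self :
    V.map ((LinearMap.ker (T : X →ₗ[ℝ] Y))ᗮ.starProjection : X →ₗ[ℝ] X) ⊓
      (V.map ((adjoint T ∘L T : X →L[ℝ] X) : X →ₗ[ℝ] X))ᗮ = ⊥ := by
  rw [eq_bot_iff]
  rintro _ ⟨⟨v, hv, rfl⟩, hperp⟩
  have hTv : T v = 0 := (inner_adjoint_comp_self_starProjection_orthogonal_ker_eq_zero_iff T v).1
    ((mem_orthogonal _ _).1 hperp _ (mem_map_of_mem hv))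
  exact (mem_bot ℝ).2 ((starProjection_apply_eq_zero_iff _).2
    (le_orthogonal_orthogonal _ (LinearMap.mem_ker.2 hTv)))

lemma map_adjoint_comp_self_inf_orthogonal_map_starProjection :
    V.map ((adjoint T ∘L T : X →L[ℝ] X) : X →ₗ[ℝ] X) ⊓
      (V.map ((LinearMap.ker (T : X →ₗ[ℝ] Y))ᗮ.starProjection : X →ₗ[ℝ] X))ᗮ = ⊥ := by
  rw [eq_bot_iff]
  rintro _ ⟨⟨v, hv, rfl⟩, hperp⟩
  have hTv : T v = 0 := (inner_adjoint_comp_self_starProjection_orthogonal_ker_eq_zero_iff T v).1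
    ((mem_orthogonal' _ _).1 hperp _ (mem_map_of_mem hv))
  simp [hTv]

lemma mem_orthogonal_map_adjoint_comp_self_iff {x : X} :
    x ∈ (V.map ((adjoint T ∘L T : X →L[ℝ] X) : X →ₗ[ℝ] X))ᗮ ↔
      T x ∈ (V.map (T : X →ₗ[ℝ] Y))ᗮ := by
  simp only [mem_orthogonal', Submodule.mem_map, forall_exists_index, and_imp,
    forall_apply_eq_imp_iff₂, ContinuousLinearMap.coe_coe, comp_apply, adjoint_inner_right]

lemma sub_mem_orthogonal_map_adjoint_comp_self [(V.map (T : X →ₗ[ℝ] Y)).HasOrthogonalProjection]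
    {y : Y} {x₁ x₂ : X} (h₁ : T x₁ = (V.map (T : X →ₗ[ℝ] Y)).starProjection y)
    (h₂ : T x₂ = (LinearMap.range (T : X →ₗ[ℝ] Y)).topologicalClosure.starProjection y) :
    x₁ - x₂ ∈ (V.map ((adjoint T ∘L T : X →L[ℝ] X) : X →ₗ[ℝ] X))ᗮ := by
  rw [mem_orthogonal_map_adjoint_comp_self_iff, map_sub, h₁, h₂,
    ← sub_sub_sub_cancel_left _ _ y]
  have hle : V.map (T : X →ₗ[ℝ] Y) ≤ (LinearMap.range (T : X →ₗ[ℝ] Y)).topologicalClosure :=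
    LinearMap.map_le_range.trans (le_topologicalClosure _)
  refine sub_mem (orthogonal_le hle ?_) ?_ <;> exact sub_starProjection_mem_orthogonal y

end Operator

theorem stmt3_general
    (T : X →L[ℝ] Y) (Xn : ℕ → Submodule ℝ X)
    (hfin : ∀ n, FiniteDimensional ℝ (Xn n))
    (Tn : ℕ → X →L[ℝ] Y) (hTn : ∀ n, Tn n = T.comp (orthProj (Xn n)))
    (Tdag : Y → X)
    (hTdag : ∀ y ∈ (LinearMap.range (T : X →ₗ[ℝ] Y) ⊔ (LinearMap.range (T : X →ₗ[ℝ] Y))ᗮ : Submodule ℝ Y),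
      Tdag y ∈ (LinearMap.ker (T : X →ₗ[ℝ] Y))ᗮ ∧
        T (Tdag y) = orthProj (LinearMap.range (T : X →ₗ[ℝ] Y)).topologicalClosure y)
    (Tdagn : ℕ → Y → X)
    (hTdagn : ∀ n (y : Y), Tdagn n y ∈ (LinearMap.ker (Tn n : X →ₗ[ℝ] Y))ᗮ ∧
      (Tn n) (Tdagn n y) = orthProj ((Xn n).map (T : X →ₗ[ℝ] Y)) y)
    (hker : FiniteDimensional ℝ (LinearMap.ker (T : X →ₗ[ℝ] Y)))
    (hKA : (∀ x : X, x ∈ LinearMap.ker (T : X →ₗ[ℝ] Y) ↔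
      Tendsto (fun n => Metric.infDist x ((LinearMap.ker (T : X →ₗ[ℝ] Y) ⊓ Xn n : Submodule ℝ X) : Set X))
        atTop (𝓝 0))) :
    ∃ nStar : ℕ, ∀ n ≥ nStar,
      ∀ y ∈ (LinearMap.range (T : X →ₗ[ℝ] Y) ⊔ (LinearMap.range (T : X →ₗ[ℝ] Y))ᗮ : Submodule ℝ Y),
        ‖Tdagn n y - Tdag y‖ ≤
          (Real.sqrt (1 - (gapSub ((Xn n).map ((orthProj ((LinearMap.ker (T : X →ₗ[ℝ] Y))ᗮ) : X →L[ℝ] X) : X →ₗ[ℝ] X)) ((Xn n).map (((ContinuousLinearMap.adjoint T).comp T : X →L[ℝ] X) : X →ₗ[ℝ] X))) ^ 2))⁻¹ * Metric.infDist (Tdag y) ((Xn n : Set X)) := by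
  obtain ⟨n₀, hn₀⟩ := eventually_atTop.1 (eventually_le_of_tendsto_infDist fun x hx => (hKA x).1 hx)
  refine ⟨n₀, fun n hn y hy => ?_⟩
  have := hfin n
  set N := LinearMap.ker (T : X →ₗ[ℝ] Y)
  set P := Nᗮ.starProjection
  set x := Tdag y
  set xₙ := Tdagn n y
  obtain ⟨hxN, hTx⟩ := hTdag y hy
  obtain ⟨hxₙ, hTxₙ⟩ := hTdagn n y
  simp only [hTn, orthProj_eq_starProjection] at hxₙ hTxₙ hTx ⊢
  obtain ⟨hxₙV, hxₙN⟩ := orthogonal_ker_comp_starProjection_le T (Xn n) (hn₀ n hn) hxₙ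
  rw [comp_apply, (Xn n).starProjection_eq_self_iff.2 hxₙV] at hTxₙ
  have hm : P (xₙ - (Xn n).starProjection x) ∈ (Xn n).map (P : X →ₗ[ℝ] X) :=
    mem_map_of_mem (sub_mem hxₙV ((Xn n).starProjection_apply_mem x))
  have hres : xₙ - x - P (xₙ - (Xn n).starProjection x) = P ((Xn n).starProjection x - x) := by
    rw [map_sub, map_sub, Nᗮ.starProjection_eq_self_iff.2 hxₙN, Nᗮ.starProjection_eq_self_iff.2 hxN]
    abel
  calc ‖xₙ - x‖
      ≤ _ * ‖xₙ - x - P (xₙ - (Xn n).starProjection x)‖ :=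
        norm_le_inv_sqrt_one_sub_gapSub_sq_mul
          (gapSub_lt_one (map_starProjection_inf_orthogonal_map_adjoint_comp_self T _)
            (map_adjoint_comp_self_inf_orthogonal_map_starProjection T _))
          (sub_mem_orthogonal_map_adjoint_comp_self T _ hTxₙ hTx) hm
    _ ≤ _ * infDist x (Xn n) := by
        rw [hres, infDist_eq_norm_sub_starProjection, norm_sub_rev x]
        gcongr
        exact Nᗮ.norm_starProjection_apply_le _

/-- Rate-of-convergence estimate under kernel approximability, `dim N(T) < ∞`:
`‖Tₙ†y − T†y‖ ≤ (1 − gₙ²)^(−1/2) · dist(T†y, Xₙ)` for large `n`. -/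
theorem stmt3
    (T : X →L[ℝ] Y) (Xn : ℕ → Submodule ℝ X)
    (hfin : ∀ n, FiniteDimensional ℝ (Xn n))
    (hinf : ¬ FiniteDimensional ℝ X)
    (hproj : ∀ x : X, Tendsto (fun n => orthProj (Xn n) x) atTop (𝓝 x))
    (Tn : ℕ → X →L[ℝ] Y) (hTn : ∀ n, Tn n = T.comp (orthProj (Xn n)))
    (Tdag : Y → X)
    (hTdag : ∀ y ∈ (LinearMap.range (T : X →ₗ[ℝ] Y) ⊔ (LinearMap.range (T : X →ₗ[ℝ] Y))ᗮ : Submodule ℝ Y),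
      Tdag y ∈ (LinearMap.ker (T : X →ₗ[ℝ] Y))ᗮ ∧
        T (Tdag y) = orthProj (LinearMap.range (T : X →ₗ[ℝ] Y)).topologicalClosure y)
    (Tdagn : ℕ → Y → X)
    (hTdagn : ∀ n (y : Y), Tdagn n y ∈ (LinearMap.ker (Tn n : X →ₗ[ℝ] Y))ᗮ ∧
      (Tn n) (Tdagn n y) = orthProj ((Xn n).map (T : X →ₗ[ℝ] Y)) y)
    (hker : FiniteDimensional ℝ (LinearMap.ker (T : X →ₗ[ℝ] Y)))
    (hKA : (∀ x : X, x ∈ LinearMap.ker (T : X →ₗ[ℝ] Y) ↔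
      Tendsto (fun n => Metric.infDist x ((LinearMap.ker (T : X →ₗ[ℝ] Y) ⊓ Xn n : Submodule ℝ X) : Set X))
        atTop (𝓝 0))) :
    ∃ nStar : ℕ, ∀ n ≥ nStar,
      ∀ y ∈ (LinearMap.range (T : X →ₗ[ℝ] Y) ⊔ (LinearMap.range (T : X →ₗ[ℝ] Y))ᗮ : Submodule ℝ Y),
        ‖Tdagn n y - Tdag y‖ ≤
          (Real.sqrt (1 - (gapSub ((Xn n).map ((orthProj ((LinearMap.ker (T : X →ₗ[ℝ] Y))ᗮ) : X →L[ℝ] X) : X →ₗ[ℝ] X)) ((Xn n).map (((ContinuousLinearMap.adjoint T).comp T : X →L[ℝ] X) : X →ₗ[ℝ] X))) ^ 2))⁻¹ * Metric.infDist (Tdag y) ((Xn n : Set X)) :=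
  stmt3_general T Xn hfin Tn hTn Tdag hTdag Tdagn hTdagn hker hKA
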